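/- arXiv:1808.03053 — 2 statements merged into one kernel-verified Lean document; each statement's English description precedes it below -/
import Mathlib

section
/- Let X ⊂ R^n (n ≥ 2) be a disconnected set whose closure Cl(X) is connected. Then for every r > sqrt(n−1)/2, the r-offset discretization Δ_r(X) = U(X,r) ∩ Z^n is 0-connected. -/
noncomputable section

/-- Embedding of an integer point into Euclidean `n`-space. -/
def toE (n : ℕ) (p : Fin n → ℤ) : EuclideanSpace ℝ (Fin n) := WithLp.toLp 2 (fun i => (p i : ℝ))

/-- Two integer points are `k`-adjacent iff they are distinct, all coordinates differ
by at most 1, and at most `n - k` coordinates differ. -/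
def kAdj (n k : ℕ) (p q : Fin n → ℤ) : Prop :=
  p ≠ q ∧ (∀ i, |p i - q i| ≤ 1) ∧
    (Finset.univ.filter (fun i => p i ≠ q i)).card ≤ n - k

/-- A set of integer points is `k`-connected iff any two of its points are joined by a
path inside the set whose consecutive points are `k`-adjacent. -/
def kConn (n k : ℕ) (S : Set (Fin n → ℤ)) : Prop :=
  ∀ p ∈ S, ∀ q ∈ S,
    Relation.ReflTransGen (fun a b => a ∈ S ∧ b ∈ S ∧ kAdj n k a b) p q

/-- The closed `r`-offset (closed `r`-neighborhood) of `X`. -/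
def offset (n : ℕ) (X : Set (EuclideanSpace ℝ (Fin n))) (r : ℝ) :
    Set (EuclideanSpace ℝ (Fin n)) := ⋃ x ∈ X, Metric.closedBall x r

/-- The `r`-offset discretization of `X`: the integer points in the `r`-offset. -/
def disc (n : ℕ) (X : Set (EuclideanSpace ℝ (Fin n))) (r : ℝ) :
    Set (Fin n → ℤ) := {p | toE n p ∈ offset n X r}

/-!
Fix `x₀, y₀ ∈ X` witnessing `p, q ∈ Δ_r(X)`. The lattice points of a closed ball are
`0`-connected to the rounding of its centre, since moving every coordinate one step towards that
rounding never increases the distance to the centre. Put `α > 0` with `α ≤ 1/2` and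
`(n-1)/4 + α² ≤ r²`. Walking through the connected set `Cl(X)` in steps shorter than `α`, we carry
a point `c ∈ Δ_r(X)`, joined to the rounding of `x₀`, with every coordinate within `1 - α` of the
current point `z`. If the rounding of `z` is closer than `r` to `z`, it lies in `Δ_r(X)` and is
`0`-adjacent to `c`; otherwise every coordinate of `z` is at least `α` away from `ℤ`, which forces
`c` to stay within `1 - α` of `z`.
-/

open Relation

def kJoined (n k : ℕ) (S : Set (Fin n → ℤ)) : (Fin n → ℤ) → (Fin n → ℤ) → Prop :=
  ReflTransGen fun a b => a ∈ S ∧ b ∈ S ∧ kAdj n k a b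

section Digital

variable {n k : ℕ}

theorem kAdj.symm {p q : Fin n → ℤ} (h : kAdj n k p q) : kAdj n k q p := by
  obtain ⟨hne, habs, hcard⟩ := h
  refine ⟨hne.symm, fun i => abs_sub_comm (p i) (q i) ▸ habs i, ?_⟩
  simpa only [ne_comm] using hcard

theorem kAdj_zero_iff {p q : Fin n → ℤ} : kAdj n 0 p q ↔ p ≠ q ∧ ∀ i, |p i - q i| ≤ 1 := by
  simp only [kAdj, Nat.sub_zero]
  exact and_congr_right fun _ => and_iff_left ((Finset.card_filter_le _ _).trans (by simp))

theorem kJoined.symm {S : Set (Fin n → ℤ)} {p q : Fin n → ℤ} (h : kJoined n k S p q) :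
    kJoined n k S q p :=
  ReflTransGen.mono (fun _ _ hab => ⟨hab.2.1, hab.1, hab.2.2.symm⟩) _ _ h.swap

theorem kJoined.mono {S T : Set (Fin n → ℤ)} (hST : S ⊆ T) {p q : Fin n → ℤ}
    (h : kJoined n k S p q) : kJoined n k T p q :=
  ReflTransGen.mono (fun _ _ hab => ⟨hST hab.1, hST hab.2.1, hab.2.2⟩) _ _ h

theorem kJoined_zero_of_abs_sub_le_one {S : Set (Fin n → ℤ)} {p q : Fin n → ℤ} (hp : p ∈ S)
    (hq : q ∈ S) (h : ∀ i, |p i - q i| ≤ 1) : kJoined n 0 S p q := by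
  by_cases hpq : p = q
  · exact hpq ▸ .refl
  · exact .single ⟨hp, hq, kAdj_zero_iff.2 ⟨hpq, h⟩⟩

theorem kJoined_zero_of_abs_sub_lt_two {S : Set (Fin n → ℤ)} {p q : Fin n → ℤ} (hp : p ∈ S)
    (hq : q ∈ S) (h : ∀ i, |(p i : ℝ) - q i| < 2) : kJoined n 0 S p q :=
  kJoined_zero_of_abs_sub_le_one hp hq fun i => by
    have : |p i - q i| < 2 := by exact_mod_cast h i
    omega

def stepToward (q p : Fin n → ℤ) : Fin n → ℤ := fun i => p i + Int.sign (q i - p i)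

theorem Int.natAbs_sub_sign (d : ℤ) : (d - d.sign).natAbs = d.natAbs - 1 := by
  rcases lt_trichotomy d 0 with hd | rfl | hd
  · rw [Int.sign_eq_neg_one_of_neg hd]; omega
  · rfl
  · rw [Int.sign_eq_one_of_pos hd]; omega

theorem natAbs_sub_stepToward (q p : Fin n → ℤ) (i : Fin n) :
    (q i - stepToward q p i).natAbs = (q i - p i).natAbs - 1 := by
  rw [stepToward, ← Int.natAbs_sub_sign, sub_add_eq_sub_sub]

theorem kAdj_stepToward {q p : Fin n → ℤ} (h : p ≠ q) : kAdj n 0 p (stepToward q p) := by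
  refine kAdj_zero_iff.2 ⟨fun hp => h (funext fun i => ?_), fun i => ?_⟩
  · have := natAbs_sub_stepToward q p i
    rw [← hp] at this
    omega
  · rcases Int.sign_trichotomy (q i - p i) with hs | hs | hs <;>
      simp [stepToward, hs]

theorem kJoined_of_stepToward_mem {T : Set (Fin n → ℤ)} {q : Fin n → ℤ}
    (hT : ∀ p ∈ T, stepToward q p ∈ T) {p : Fin n → ℤ} (hp : p ∈ T) : kJoined n 0 T p q := by
  suffices key : ∀ N, ∀ p ∈ T, (∀ i, (q i - p i).natAbs ≤ N) → kJoined n 0 T p q from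
    key _ p hp fun i =>
      Finset.single_le_sum (f := fun j => (q j - p j).natAbs) (fun _ _ => Nat.zero_le _)
        (Finset.mem_univ i)
  intro N
  induction N with
  | zero =>
    intro p hp hpq
    have : p = q := funext fun i => by have := hpq i; omega
    exact this ▸ .refl
  | succ N ih =>
    intro p hp hpq
    by_cases h : p = q
    · exact h ▸ .refl
    refine .head ⟨hp, hT p hp, kAdj_stepToward h⟩ (ih _ (hT p hp) fun i => ?_)
    have := hpq i
    rw [natAbs_sub_stepToward]
    omega

end Digital

theorem abs_add_sign_sub_le {a b : ℤ} {t : ℝ} (hb : |(b : ℝ) - t| ≤ 1 / 2) :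
    |((a + Int.sign (b - a) : ℤ) : ℝ) - t| ≤ |(a : ℝ) - t| := by
  rw [abs_le] at hb
  rcases lt_trichotomy a b with hab | rfl | hab
  · have : (a : ℝ) + 1 ≤ b := by exact_mod_cast hab
    rw [Int.sign_eq_one_of_pos (by omega), abs_sub_comm (a : ℝ)]
    push_cast
    apply abs_le_abs <;> linarith
  · simp
  · have : (b : ℝ) + 1 ≤ a := by exact_mod_cast hab
    rw [Int.sign_eq_neg_one_of_neg (by omega)]
    push_cast
    apply abs_le_abs <;> linarith

theorem abs_int_sub_le_one_sub {t α : ℝ} (h : ∀ m : ℤ, α ≤ |t - m|) {c : ℤ}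
    (hc : |(c : ℝ) - t| < 1) : |(c : ℝ) - t| ≤ 1 - α := by
  have hup := h (c + 1)
  have hdown := h (c - 1)
  push_cast at hup hdown
  rw [abs_lt] at hc
  rcases abs_cases ((c : ℝ) - t) with ⟨hct, _⟩ | ⟨hct, _⟩
  · rw [abs_of_pos (by linarith : 0 < t - (c - 1))] at hdown
    linarith
  · rw [abs_of_neg (by linarith : t - (c + 1) < 0)] at hup
    linarith

section Euclidean

variable {n : ℕ}

@[simp]
theorem toE_apply (p : Fin n → ℤ) (i : Fin n) : toE n p i = p i := rfl

theorem EuclideanSpace.dist_le_dist_of_abs_sub_le {ι : Type*} [Fintype ι]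
    {x y x' y' : EuclideanSpace ℝ ι} (h : ∀ i, |x i - y i| ≤ |x' i - y' i|) :
    dist x y ≤ dist x' y' := by
  rw [EuclideanSpace.dist_eq, EuclideanSpace.dist_eq]
  gcongr with i
  simpa only [Real.dist_eq] using h i

def roundLattice (z : EuclideanSpace ℝ (Fin n)) : Fin n → ℤ := fun i => round (z i)

theorem abs_roundLattice_sub_le (z : EuclideanSpace ℝ (Fin n)) (i : Fin n) :
    |(roundLattice z i : ℝ) - z i| ≤ 1 / 2 := by
  rw [abs_sub_comm]
  exact abs_sub_round (z i)

theorem dist_roundLattice_le (z : EuclideanSpace ℝ (Fin n)) (c : Fin n → ℤ) :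
    dist (toE n (roundLattice z)) z ≤ dist (toE n c) z :=
  EuclideanSpace.dist_le_dist_of_abs_sub_le fun i => by
    simpa only [toE_apply, roundLattice, abs_sub_comm _ (z i)] using round_le (z i) (c i)

theorem dist_roundLattice_sq_le (z : EuclideanSpace ℝ (Fin n)) (i : Fin n) :
    dist (toE n (roundLattice z)) z ^ 2 ≤ |z i - round (z i)| ^ 2 + (n - 1) / 4 := by
  have hterm : ∀ j, |z j - round (z j)| ^ 2 ≤ 1 / 4 := fun j => by
    nlinarith [abs_sub_round (z j), abs_nonneg (z j - round (z j))]
  have hrest : ∑ j ∈ Finset.univ.erase i, |z j - round (z j)| ^ 2 ≤ (n - 1) / 4 := by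
    calc ∑ j ∈ Finset.univ.erase i, |z j - round (z j)| ^ 2
        ≤ ∑ _j ∈ Finset.univ.erase i, (1 / 4 : ℝ) := Finset.sum_le_sum fun j _ => hterm j
      _ = (n - 1) / 4 := by
        rw [Finset.sum_const, Finset.card_erase_of_mem (Finset.mem_univ i), Finset.card_univ,
          Fintype.card_fin, nsmul_eq_mul, Nat.cast_pred i.pos]
        ring
  rw [EuclideanSpace.dist_sq_eq, ← Finset.add_sum_erase _ _ (Finset.mem_univ i)]
  simp only [toE_apply, roundLattice, Real.dist_eq, abs_sub_comm _ (z _)] at hrest ⊢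
  linarith

theorem le_abs_sub_int_of_le_dist_roundLattice {z : EuclideanSpace ℝ (Fin n)} {r α : ℝ}
    (hα : 0 ≤ α) (hαr : (n - 1) / 4 + α ^ 2 ≤ r ^ 2) (hr : 0 ≤ r)
    (hz : r ≤ dist (toE n (roundLattice z)) z) (i : Fin n) (m : ℤ) : α ≤ |z i - m| := by
  have hsq : α ^ 2 ≤ |z i - round (z i)| ^ 2 := by
    nlinarith [dist_roundLattice_sq_le z i, pow_le_pow_left₀ hr hz 2]
  exact ((pow_le_pow_iff_left₀ hα (abs_nonneg _) two_ne_zero).1 hsq).trans (round_le (z i) m)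

theorem kJoined_roundLattice_of_dist_le {S : Set (Fin n → ℤ)} {x : EuclideanSpace ℝ (Fin n)}
    {s : ℝ} (hS : ∀ c, dist (toE n c) x ≤ s → c ∈ S) {p : Fin n → ℤ}
    (hp : dist (toE n p) x ≤ s) : kJoined n 0 S p (roundLattice x) := by
  refine (kJoined_of_stepToward_mem (T := {c | dist (toE n c) x ≤ s}) (fun c hc => ?_) hp).mono hS
  refine le_trans (EuclideanSpace.dist_le_dist_of_abs_sub_le fun i => ?_) hc
  simpa only [toE_apply, stepToward] using abs_add_sign_sub_le (abs_roundLattice_sub_le x i)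

end Euclidean

theorem IsPreconnected.induction_of_dist_lt {E : Type*} [PseudoMetricSpace E] {s : Set E}
    (hs : IsPreconnected s) {P : E → Prop} {δ : ℝ} (hδ : 0 < δ)
    (hP : ∀ x ∈ s, ∀ y ∈ s, dist x y < δ → P x → P y) {x y : E} (hx : x ∈ s) (hy : y ∈ s)
    (hPx : P x) : P y := by
  refine hs.induction₂' (fun a b => P a → P b) (fun a ha => ?_)
    (fun _ _ _ _ _ _ hab hbc h => hbc (hab h)) hx hy hPx
  filter_upwards [self_mem_nhdsWithin, nhdsWithin_le_nhds (Metric.ball_mem_nhds a hδ)]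
    with b hb hab
  exact ⟨hP a ha b hb (dist_comm a b ▸ hab), hP b hb a ha hab⟩

section Discretization

variable {n : ℕ} {X : Set (EuclideanSpace ℝ (Fin n))} {r : ℝ}

theorem mem_disc_iff {p : Fin n → ℤ} : p ∈ disc n X r ↔ ∃ x ∈ X, dist (toE n p) x ≤ r := by
  simp [disc, offset]

theorem mem_disc_of_mem_closure {z : EuclideanSpace ℝ (Fin n)} (hz : z ∈ closure X)
    {p : Fin n → ℤ} (hp : dist (toE n p) z < r) : p ∈ disc n X r := by
  obtain ⟨x, hx, hzx⟩ := Metric.mem_closure_iff.1 hz _ (sub_pos.2 hp)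
  exact mem_disc_iff.2 ⟨x, hx, by linarith [dist_triangle (toE n p) z x]⟩

theorem kJoined_roundLattice_of_mem_disc {x : EuclideanSpace ℝ (Fin n)} (hx : x ∈ X)
    {p : Fin n → ℤ} (hp : dist (toE n p) x ≤ r) :
    roundLattice x ∈ disc n X r ∧ kJoined n 0 (disc n X r) p (roundLattice x) :=
  ⟨mem_disc_iff.2 ⟨x, hx, (dist_roundLattice_le x p).trans hp⟩,
    kJoined_roundLattice_of_dist_le (fun _ hc => mem_disc_iff.2 ⟨x, hx, hc⟩) hp⟩

theorem exists_kJoined_of_dist_lt {α : ℝ} (hα : 0 < α) (hα_half : α ≤ 1 / 2)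
    (hαr : (n - 1) / 4 + α ^ 2 ≤ r ^ 2) (hr : 0 ≤ r)
    {z z' : EuclideanSpace ℝ (Fin n)} (hz' : z' ∈ closure X)
    (hzz' : dist z z' < α) {c : Fin n → ℤ} (hc : c ∈ disc n X r)
    (hcz : ∀ i, |(c i : ℝ) - z i| ≤ 1 - α) :
    ∃ c' ∈ disc n X r, kJoined n 0 (disc n X r) c c' ∧ ∀ i, |(c' i : ℝ) - z' i| ≤ 1 - α := by
  have hzz'_apply : ∀ i, |z i - z' i| < α := fun i =>
    (PiLp.dist_apply_le z z' i).trans_lt hzz'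
  by_cases hgood : dist (toE n (roundLattice z')) z' < r
  · have hround := abs_roundLattice_sub_le z'
    refine ⟨_, mem_disc_of_mem_closure hz' hgood, kJoined_zero_of_abs_sub_lt_two hc
      (mem_disc_of_mem_closure hz' hgood) fun i => ?_, fun i => by linarith [hround i]⟩
    linarith [abs_sub_le (c i : ℝ) (z i) (z' i), abs_sub_le (c i : ℝ) (z' i) (roundLattice z' i),
      hcz i, hzz'_apply i, abs_sub_comm (roundLattice z' i : ℝ) (z' i), hround i]
  · have hfar := le_abs_sub_int_of_le_dist_roundLattice hα.le hαr hr (not_lt.1 hgood)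
    refine ⟨c, hc, .refl, fun i => abs_int_sub_le_one_sub (hfar i) ?_⟩
    linarith [abs_sub_le (c i : ℝ) (z i) (z' i), hcz i, hzz'_apply i]

theorem exists_margin (hr : √(n - 1) / 2 < r) :
    0 < r ∧ ∃ α : ℝ, 0 < α ∧ α ≤ 1 / 2 ∧ (n - 1) / 4 + α ^ 2 ≤ r ^ 2 := by
  have hr0 : 0 < r := (div_nonneg (Real.sqrt_nonneg _) zero_le_two).trans_lt hr
  have hsq : ((n : ℝ) - 1) / 4 < r ^ 2 := by
    have := (Real.sqrt_lt' (by linarith)).1 (by linarith : √((n : ℝ) - 1) < 2 * r)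
    linarith
  refine ⟨hr0, min (1 / 2) (r ^ 2 - (n - 1) / 4), lt_min one_half_pos (by linarith),
    min_le_left _ _, ?_⟩
  have h1 := min_le_left (1 / 2 : ℝ) (r ^ 2 - (n - 1) / 4)
  have h2 := min_le_right (1 / 2 : ℝ) (r ^ 2 - (n - 1) / 4)
  have h0 : 0 < min (1 / 2 : ℝ) (r ^ 2 - (n - 1) / 4) := lt_min one_half_pos (by linarith)
  nlinarith

end Discretization

theorem disc_zero_conn_of_disconnected_general (n : ℕ)
    (X : Set (EuclideanSpace ℝ (Fin n)))
    (hcl : IsConnected (closure X))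
    (r : ℝ) (hr : Real.sqrt (n - 1) / 2 < r) :
    kConn n 0 (disc n X r) := by
  obtain ⟨hr0, α, hα, hα_half, hαr⟩ := exists_margin hr
  intro p hp q hq
  obtain ⟨x, hx, hpx⟩ := mem_disc_iff.1 hp
  obtain ⟨y, hy, hqy⟩ := mem_disc_iff.1 hq
  obtain ⟨hxS, hp_x⟩ := kJoined_roundLattice_of_mem_disc hx hpx
  obtain ⟨hyS, hq_y⟩ := kJoined_roundLattice_of_mem_disc hy hqy
  obtain ⟨c, hcS, hxc, hcy⟩ := hcl.isPreconnected.induction_of_dist_lt hα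
    (P := fun z => ∃ c ∈ disc n X r, kJoined n 0 (disc n X r) (roundLattice x) c ∧
      ∀ i, |(c i : ℝ) - z i| ≤ 1 - α)
    (fun _ _ _ hz' hzz' ⟨_, hcS, hxc, hcz⟩ =>
      (exists_kJoined_of_dist_lt hα hα_half hαr hr0.le hz' hzz' hcS hcz).imp
        fun _ ⟨hc'S, hcc', hc'z'⟩ => ⟨hc'S, hxc.trans hcc', hc'z'⟩)
    (subset_closure hx) (subset_closure hy)
    ⟨_, hxS, .refl, fun i => by linarith [abs_roundLattice_sub_le x i]⟩
  have hcy' : kJoined n 0 (disc n X r) c (roundLattice y) :=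
    kJoined_zero_of_abs_sub_lt_two hcS hyS fun i => by
      linarith [abs_sub_le (c i : ℝ) (y i) (roundLattice y i), hcy i,
        abs_sub_comm (roundLattice y i : ℝ) (y i), abs_roundLattice_sub_le y i]
  exact hp_x.trans (hxc.trans (hcy'.trans hq_y.symm))

/-- If `X ⊆ ℝ^n` (`n ≥ 2`) is disconnected but its closure is connected, then for every
`r > √(n-1) / 2` the `r`-offset discretization of `X` is `0`-connected. -/
theorem disc_zero_conn_of_disconnected (n : ℕ) (hn : 2 ≤ n)
    (X : Set (EuclideanSpace ℝ (Fin n)))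
    (hX : ¬ IsConnected X) (hcl : IsConnected (closure X))
    (r : ℝ) (hr : Real.sqrt (n - 1) / 2 < r) :
    kConn n 0 (disc n X r) :=
  disc_zero_conn_of_disconnected_general n X hcl r hr
end
end

section
/- If X ⊂ R^n (n ≥ 2) is a (possibly disconnected) set such that the offset U(X,r) is connected for some r > 0, then Δ_{r + sqrt(n)/2}(X) is (n−1)-connected and Δ_{r + sqrt(n−1)/2}(X) is 0-connected. -/
noncomputable section

/-! Attach to every point `y` of the connected offset `U = U(X, r)` a set `L y` of lattice points
of `Δ = Δ_{r+b}(X)` that are connected in `Δ`, such that for `y'` near `y` every point of `L y`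
is connected to a point of `L y'` and vice versa. Then being connected to a given lattice point
through `L y` is locally constant on `U`, hence constant, and every point of `Δ` is reached
this way.

For `b ≥ √n / 2` take the lattice points of the ball `B(y, b)`: it contains the rounding of `y`,
coordinate steps towards the rounding never increase the distance to `y`, and by discreteness
`B(y', b)` has no lattice point outside `B(y, b)` when `y'` is close to `y`.
For `b ≥ √(n-1) / 2` and `0`-adjacency take the points of `Δ` in the open unit cube around `y`;
they are pairwise `0`-adjacent. Either the rounding of `y` lies in `Δ` and is `0`-adjacent to
all points of the cubes around nearby `y'`, or `y` has no integer coordinate, and then these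
cubes contain the same lattice points as the cube around `y`. -/

open Metric Set Filter Topology Relation

theorem IsPreconnected.reflTransGen_of_labels {E α : Type*} [TopologicalSpace E] {U : Set E}
    (hU : IsPreconnected U) {R : α → α → Prop} [Std.Symm R] {L : E → Set α}
    (hL : ∀ y ∈ U, ∀ z ∈ L y, ∀ z' ∈ L y, ReflTransGen R z z')
    (hlink : ∀ y ∈ U, ∀ᶠ y' in 𝓝[U] y, (∀ z ∈ L y, ∃ z' ∈ L y', ReflTransGen R z z') ∧
      (∀ z' ∈ L y', ∃ z ∈ L y, ReflTransGen R z' z))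
    {S : Set α} (hS : ∀ p ∈ S, ∃ y ∈ U, ∃ z ∈ L y, ReflTransGen R p z) :
    ∀ p ∈ S, ∀ q ∈ S, ReflTransGen R p q := by
  let Linked : E → E → Prop := fun y y' => ∀ z ∈ L y, ∃ z' ∈ L y', ReflTransGen R z z'
  have hlinked : ∀ y ∈ U, ∀ y' ∈ U, Linked y y' := by
    intro y hy y' hy'
    refine hU.induction₂' Linked (fun y hy => hlink y hy) ?_ hy hy'
    intro a b c _ _ _ hab hbc z hz
    obtain ⟨z₁, hz₁, h₁⟩ := hab z hz
    obtain ⟨z₂, hz₂, h₂⟩ := hbc z₁ hz₁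
    exact ⟨z₂, hz₂, h₁.trans h₂⟩
  intro p hp q hq
  obtain ⟨y, hy, z, hz, hpz⟩ := hS p hp
  obtain ⟨y', hy', z', hz', hqz'⟩ := hS q hq
  obtain ⟨w, hw, hzw⟩ := hlinked y hy y' hy' z hz
  exact hpz.trans (hzw.trans ((hL y' hy' w hw z' hz').trans (symm hqz')))

section Lattice

variable {n : ℕ}

def kAdjIn (n k : ℕ) (S : Set (Fin n → ℤ)) (a b : Fin n → ℤ) : Prop :=
  a ∈ S ∧ b ∈ S ∧ kAdj n k a b

lemma kAdj_symm {k : ℕ} {a b : Fin n → ℤ} (h : kAdj n k a b) : kAdj n k b a := by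
  obtain ⟨hne, hle, hcard⟩ := h
  refine ⟨hne.symm, fun i => abs_sub_comm (a i) (b i) ▸ hle i, ?_⟩
  simpa only [ne_comm] using hcard

instance (k : ℕ) (S : Set (Fin n → ℤ)) : Std.Symm (kAdjIn n k S) :=
  ⟨fun _ _ ⟨ha, hb, h⟩ => ⟨hb, ha, kAdj_symm h⟩⟩

lemma kAdj_update {k : ℕ} (hk : k ≤ n - 1) (p : Fin n → ℤ) (i : Fin n) {v : ℤ}
    (hv : v = p i + 1 ∨ v = p i - 1) : kAdj n k p (Function.update p i v) := by
  refine ⟨fun h => ?_, fun j => ?_, ?_⟩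
  · have := congrFun h i
    rw [Function.update_self] at this
    omega
  · rcases eq_or_ne j i with rfl | hj
    · rcases hv with rfl | rfl <;> simp
    · simp [hj]
  · have hsub : Finset.univ.filter (fun j => p j ≠ Function.update p i v j) ⊆ {i} := by
      intro j hj
      by_contra hji
      simp_all
    have := i.isLt
    calc _ ≤ ({i} : Finset (Fin n)).card := Finset.card_le_card hsub
      _ ≤ n - k := by rw [Finset.card_singleton]; omega

lemma kAdj_zero_of_abs_sub_le {a b : Fin n → ℤ} (hab : a ≠ b) (h : ∀ i, |a i - b i| ≤ 1) :
    kAdj n 0 a b :=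
  ⟨hab, h, (Finset.card_filter_le _ _).trans (by simp)⟩

def latticeRound (y : EuclideanSpace ℝ (Fin n)) : Fin n → ℤ := fun i => round (y i)

lemma abs_sub_le_dist_toE (z : Fin n → ℤ) (y : EuclideanSpace ℝ (Fin n)) (i : Fin n) :
    |(z i : ℝ) - y i| ≤ dist (toE n z) y :=
  PiLp.dist_apply_le (toE n z) y i

lemma dist_toE_le_dist_toE {a c : Fin n → ℤ} {y : EuclideanSpace ℝ (Fin n)}
    (h : ∀ i, |(a i : ℝ) - y i| ≤ |(c i : ℝ) - y i|) : dist (toE n a) y ≤ dist (toE n c) y := by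
  rw [EuclideanSpace.dist_eq, EuclideanSpace.dist_eq]
  gcongr with i
  exact h i

lemma dist_latticeRound_le_dist_toE (y : EuclideanSpace ℝ (Fin n)) (z : Fin n → ℤ) :
    dist (toE n (latticeRound y)) y ≤ dist (toE n z) y :=
  dist_toE_le_dist_toE fun i => by
    have h := round_le (y i) (z i)
    rwa [abs_sub_comm (y i), abs_sub_comm (y i)] at h

lemma dist_latticeRound_le (y : EuclideanSpace ℝ (Fin n)) (s : Finset (Fin n))
    (hs : ∀ i ∉ s, (round (y i) : ℝ) = y i) :
    dist (toE n (latticeRound y)) y ≤ √s.card / 2 := by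
  have hterm : ∀ i, dist (toE n (latticeRound y) i) (y i) ^ 2 ≤ if i ∈ s then 1 / 4 else 0 := by
    intro i
    change dist ((round (y i) : ℤ) : ℝ) (y i) ^ 2 ≤ _
    rw [Real.dist_eq]
    split_ifs with hi
    · calc |(round (y i) : ℝ) - y i| ^ 2 ≤ (1 / 2) ^ 2 := by
            gcongr
            rw [abs_sub_comm]
            exact abs_sub_round (y i)
        _ = 1 / 4 := by norm_num
    · simp [hs i hi]
  calc dist (toE n (latticeRound y)) y
      ≤ √(∑ i, if i ∈ s then (1 / 4 : ℝ) else 0) := by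
        rw [EuclideanSpace.dist_eq]; exact Real.sqrt_le_sqrt (Finset.sum_le_sum fun i _ => hterm i)
    _ = √s.card / 2 := by
        rw [Finset.sum_ite_mem, Finset.univ_inter, Finset.sum_const, nsmul_eq_mul,
          Real.sqrt_mul (Nat.cast_nonneg _), show (1 / 4 : ℝ) = (1 / 2) ^ 2 by norm_num,
          Real.sqrt_sq (by norm_num)]
        ring

lemma abs_stepToward_round_sub_le (t : ℝ) {a : ℤ} (ha : a ≠ round t) :
    |((if a < round t then a + 1 else a - 1 : ℤ) : ℝ) - t| ≤ |(a : ℝ) - t| := by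
  have hround := round_le t a
  rw [abs_sub_comm t, abs_sub_comm t] at hround
  split_ifs with h
  · have : (a : ℝ) + 1 ≤ round t := by exact_mod_cast h
    push_cast
    cases abs_cases ((a : ℝ) - t) <;> cases abs_cases ((round t : ℝ) - t) <;>
      cases abs_cases ((a : ℝ) + 1 - t) <;> linarith
  · have : (round t : ℝ) + 1 ≤ a := by exact_mod_cast (by omega : round t + 1 ≤ a)
    push_cast
    cases abs_cases ((a : ℝ) - t) <;> cases abs_cases ((round t : ℝ) - t) <;>
      cases abs_cases ((a : ℝ) - 1 - t) <;> linarith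

theorem reflTransGen_latticeRound {k : ℕ} (hk : k ≤ n - 1) {S : Set (Fin n → ℤ)}
    {y : EuclideanSpace ℝ (Fin n)} {b : ℝ} (hS : ∀ z, dist (toE n z) y ≤ b → z ∈ S)
    {p : Fin n → ℤ} (hp : dist (toE n p) y ≤ b) :
    ReflTransGen (kAdjIn n k S) p (latticeRound y) := by
  set m := latticeRound y
  induction hd : ∑ i, (p i - m i).natAbs using Nat.strong_induction_on generalizing p with
  | _ d ih =>
  by_cases hpm : p = m
  · rw [hpm]
  obtain ⟨i, hi⟩ := Function.ne_iff.mp hpm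
  set p' := Function.update p i (if p i < m i then p i + 1 else p i - 1)
  have hcloser : dist (toE n p') y ≤ dist (toE n p) y := dist_toE_le_dist_toE fun j => by
    rcases eq_or_ne j i with rfl | hj
    · simpa [p', m, latticeRound] using abs_stepToward_round_sub_le (y j) hi
    · simp [p', hj]
  have hshorter : ∑ j, (p' j - m j).natAbs < d := hd ▸ by
    refine Finset.sum_lt_sum (fun j _ => ?_) ⟨i, Finset.mem_univ _, ?_⟩
    · rcases eq_or_ne j i with rfl | hj
      · simp only [p', Function.update_self]; split_ifs <;> omega
      · simp [p', hj]
    · simp only [p', Function.update_self]; split_ifs <;> omega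
  have hstep : kAdj n k p p' := kAdj_update hk p i (by split_ifs <;> simp)
  exact .head ⟨hS p hp, hS p' (hcloser.trans hp), hstep⟩ (ih _ hshorter (hcloser.trans hp) rfl)

lemma finite_setOf_dist_toE_le (y : EuclideanSpace ℝ (Fin n)) (c : ℝ) :
    {z : Fin n → ℤ | dist (toE n z) y ≤ c}.Finite := by
  refine (Set.Finite.pi' fun i => Set.finite_Icc ⌈y i - c⌉ ⌊y i + c⌋).subset fun z hz i => ?_
  have h := abs_le.mp ((abs_sub_le_dist_toE z y i).trans hz)
  exact ⟨Int.ceil_le.mpr (by linarith), Int.le_floor.mpr (by linarith)⟩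

lemma eventually_dist_toE_le_imp (y : EuclideanSpace ℝ (Fin n)) (b : ℝ) :
    ∀ᶠ y' in 𝓝 y, ∀ z : Fin n → ℤ, dist (toE n z) y' ≤ b → dist (toE n z) y ≤ b := by
  have hfar : ∀ᶠ y' in 𝓝 y, ∀ z ∈ {z : Fin n → ℤ | dist (toE n z) y ≤ b + 1},
      b < dist (toE n z) y → b < dist (toE n z) y' := by
    refine (finite_setOf_dist_toE_le y (b + 1)).eventually_all.2 fun z _ => ?_
    by_cases h : b < dist (toE n z) y
    · have hcont : ContinuousAt (fun y' => dist (toE n z) y') y :=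
        (continuous_const.dist continuous_id).continuousAt
      filter_upwards [continuousAt_const.eventually_lt hcont h] with y' hy' using fun _ => hy'
    · exact .of_forall fun _ h' => absurd h' h
  filter_upwards [hfar, ball_mem_nhds y one_pos] with y' hfar hnear z hz
  by_contra! hgt
  have hzy : dist (toE n z) y ≤ b + 1 := by
    linarith [dist_triangle (toE n z) y' y, mem_ball.mp hnear]
  exact (hfar z hzy hgt).not_ge hz

lemma mem_disc_of_dist_le {X : Set (EuclideanSpace ℝ (Fin n))} {r b : ℝ}
    {y : EuclideanSpace ℝ (Fin n)} (hy : y ∈ offset n X r) {z : Fin n → ℤ}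
    (hz : dist (toE n z) y ≤ b) : z ∈ disc n X (r + b) := by
  simp only [offset, mem_iUnion, mem_closedBall] at hy
  obtain ⟨x, hx, hyx⟩ := hy
  simp only [disc, offset, mem_iUnion, mem_closedBall]
  exact ⟨x, hx, (dist_triangle _ y x).trans (by linarith)⟩

lemma exists_mem_offset_of_mem_disc {X : Set (EuclideanSpace ℝ (Fin n))} {r b : ℝ}
    (hr : 0 ≤ r) (hb : 0 ≤ b) {z : Fin n → ℤ} (hz : z ∈ disc n X (r + b)) :
    ∃ y ∈ offset n X r, dist (toE n z) y ≤ b := by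
  simp only [disc, offset, mem_iUnion] at hz
  obtain ⟨x, hx, hzx⟩ := hz
  rw [← add_zero x, ← closedBall_add_closedBall hr hb] at hzx
  obtain ⟨y, hy, v, hv, hyv⟩ := hzx
  refine ⟨y, mem_biUnion hx hy, ?_⟩
  rw [← hyv, dist_eq_norm, add_sub_cancel_left]
  simpa using hv

theorem kConn_disc_of_sqrt_div_two_le {X : Set (EuclideanSpace ℝ (Fin n))} {r b : ℝ} {k : ℕ}
    (hU : IsPreconnected (offset n X r)) (hr : 0 ≤ r) (hk : k ≤ n - 1) (hb : √n / 2 ≤ b) :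
    kConn n k (disc n X (r + b)) := by
  have hS : ∀ y ∈ offset n X r, ∀ z, dist (toE n z) y ≤ b → z ∈ disc n X (r + b) :=
    fun _ hy _ hz => mem_disc_of_dist_le hy hz
  have hround : ∀ y, dist (toE n (latticeRound y)) y ≤ b := fun y =>
    (dist_latticeRound_le y Finset.univ (by simp)).trans (by simpa using hb)
  have hlabel : ∀ y ∈ offset n X r, ∀ z ∈ {z | dist (toE n z) y ≤ b},
      ∀ z' ∈ {z | dist (toE n z) y ≤ b}, ReflTransGen (kAdjIn n k (disc n X (r + b))) z z' :=
    fun y hy z hz z' hz' => (reflTransGen_latticeRound hk (hS y hy) hz).trans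
      (symm (reflTransGen_latticeRound hk (hS y hy) hz'))
  refine hU.reflTransGen_of_labels hlabel (fun y hy => ?_) (fun p hp => ?_)
  · filter_upwards [eventually_nhdsWithin_of_eventually_nhds (eventually_dist_toE_le_imp y b)]
      with y' hsub
    exact ⟨fun z hz => ⟨latticeRound y', hround y', hlabel y hy z hz _ (hsub _ (hround y'))⟩,
      fun z' hz' => ⟨z', hsub z' hz', .refl⟩⟩
  · obtain ⟨y, hy, hpy⟩ :=
      exists_mem_offset_of_mem_disc hr ((by positivity : (0 : ℝ) ≤ √n / 2).trans hb) hp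
    exact ⟨y, hy, p, hpy, .refl⟩

lemma reflTransGen_of_abs_sub_lt_two {S : Set (Fin n → ℤ)} {z w : Fin n → ℤ} (hz : z ∈ S)
    (hw : w ∈ S) (h : ∀ i, |(z i : ℝ) - w i| < 2) : ReflTransGen (kAdjIn n 0 S) z w := by
  by_cases hzw : z = w
  · rw [hzw]
  refine .single ⟨hz, hw, kAdj_zero_of_abs_sub_le hzw fun i => ?_⟩
  have : |z i - w i| < 2 := by exact_mod_cast h i
  omega

lemma abs_intCast_sub_lt_one_iff {k : ℤ} {s : ℝ} (hs : s ∈ Ioo (k : ℝ) (k + 1)) (m : ℤ) :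
    |(m : ℝ) - s| < 1 ↔ m = k ∨ m = k + 1 := by
  rw [abs_sub_lt_iff]
  constructor
  · rintro ⟨h₁, h₂⟩
    have : m < k + 2 := by exact_mod_cast (show (m : ℝ) < k + 2 by linarith [hs.2])
    have : k - 1 < m := by exact_mod_cast (show (k : ℝ) - 1 < m by linarith [hs.1])
    omega
  · rintro (rfl | rfl) <;> push_cast <;> constructor <;> linarith [hs.1, hs.2]

lemma eventually_forall_mem_Ioo {y : EuclideanSpace ℝ (Fin n)} {a c : Fin n → ℝ}
    (h : ∀ i, y i ∈ Ioo (a i) (c i)) : ∀ᶠ y' in 𝓝 y, ∀ i, y' i ∈ Ioo (a i) (c i) :=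
  eventually_all.2 fun i =>
    (PiLp.continuous_apply 2 _ i).continuousAt.eventually_mem (isOpen_Ioo.mem_nhds (h i))

def openCubePoints (S : Set (Fin n → ℤ)) (y : EuclideanSpace ℝ (Fin n)) : Set (Fin n → ℤ) :=
  {z ∈ S | ∀ i, |(z i : ℝ) - y i| < 1}

lemma eventually_openCubePoints_eq (S : Set (Fin n → ℤ)) {y : EuclideanSpace ℝ (Fin n)}
    (hy : ∀ i, (⌊y i⌋ : ℝ) ≠ y i) : ∀ᶠ y' in 𝓝 y, openCubePoints S y' = openCubePoints S y := by
  have hcell : ∀ i, y i ∈ Ioo (⌊y i⌋ : ℝ) (⌊y i⌋ + 1) :=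
    fun i => ⟨(Int.floor_le _).lt_of_ne (hy i), Int.lt_floor_add_one _⟩
  filter_upwards [eventually_forall_mem_Ioo hcell] with y' hy'
  ext z
  refine and_congr_right fun _ => forall_congr' fun i => ?_
  rw [abs_intCast_sub_lt_one_iff (hy' i), abs_intCast_sub_lt_one_iff (hcell i)]

lemma eventually_linked_openCubePoints {X : Set (EuclideanSpace ℝ (Fin n))} {r b : ℝ}
    (hb : √(n - 1) / 2 ≤ b) {y : EuclideanSpace ℝ (Fin n)} (hy : y ∈ offset n X r) :
    ∀ᶠ y' in 𝓝 y,
      (∀ z ∈ openCubePoints (disc n X (r + b)) y, ∃ z' ∈ openCubePoints (disc n X (r + b)) y',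
        ReflTransGen (kAdjIn n 0 (disc n X (r + b))) z z') ∧
      (∀ z' ∈ openCubePoints (disc n X (r + b)) y', ∃ z ∈ openCubePoints (disc n X (r + b)) y,
        ReflTransGen (kAdjIn n 0 (disc n X (r + b))) z' z) := by
  set S := disc n X (r + b)
  by_cases hm : latticeRound y ∈ S
  · have hmy : ∀ i, |(latticeRound y i : ℝ) - y i| ≤ 1 / 2 :=
      fun i => abs_sub_comm (y i) _ ▸ abs_sub_round (y i)
    have hnear : ∀ i, y i ∈ Ioo (y i - 1 / 2) (y i + 1 / 2) := fun i => ⟨by linarith, by linarith⟩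
    filter_upwards [eventually_forall_mem_Ioo hnear] with y' hy'
    have hmC : latticeRound y ∈ openCubePoints S y :=
      ⟨hm, fun i => (hmy i).trans_lt (by norm_num)⟩
    have hmC' : latticeRound y ∈ openCubePoints S y' := ⟨hm, fun i => by
      obtain ⟨hm₁, hm₂⟩ := abs_le.mp (hmy i)
      obtain ⟨hy₁, hy₂⟩ := hy' i
      rw [abs_lt]; constructor <;> linarith⟩
    refine ⟨fun z hz => ⟨_, hmC', reflTransGen_of_abs_sub_lt_two hz.1 hm fun i => ?_⟩,
      fun z' hz' => ⟨_, hmC, reflTransGen_of_abs_sub_lt_two hz'.1 hm fun i => ?_⟩⟩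
    · obtain ⟨hz₁, hz₂⟩ := abs_lt.mp (hz.2 i)
      obtain ⟨hm₁, hm₂⟩ := abs_le.mp (hmy i)
      rw [abs_lt]; constructor <;> linarith
    · obtain ⟨hz₁, hz₂⟩ := abs_lt.mp (hz'.2 i)
      obtain ⟨hm₁, hm₂⟩ := abs_le.mp (hmy i)
      obtain ⟨hy₁, hy₂⟩ := hy' i
      rw [abs_lt]; constructor <;> linarith
  · -- A point with an integer coordinate is within `√(n - 1) / 2` of its rounding.
    have hfrac : ∀ i, (⌊y i⌋ : ℝ) ≠ y i := by
      intro i hi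
      refine hm (mem_disc_of_dist_le hy
        ((dist_latticeRound_le y (Finset.univ.erase i) ?_).trans ?_))
      · intro j hj
        rw [Finset.mem_erase, not_and_or, not_not] at hj
        obtain rfl := hj.resolve_right (by simp)
        rw [← hi, round_intCast]
      · rw [Finset.card_erase_of_mem (Finset.mem_univ i), Finset.card_univ, Fintype.card_fin,
          Nat.cast_sub i.pos, Nat.cast_one]
        exact hb
    filter_upwards [eventually_openCubePoints_eq S hfrac] with y' hy'
    rw [hy']
    exact ⟨fun z hz => ⟨z, hz, .refl⟩, fun z hz => ⟨z, hz, .refl⟩⟩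

theorem kConn_zero_disc_of_sqrt_pred_div_two_le {X : Set (EuclideanSpace ℝ (Fin n))} {r b : ℝ}
    (hU : IsPreconnected (offset n X r)) (hr : 0 ≤ r) (hb : √(n - 1) / 2 ≤ b) :
    kConn n 0 (disc n X (r + b)) := by
  refine hU.reflTransGen_of_labels (L := openCubePoints (disc n X (r + b)))
    (fun y _ z hz z' hz' => reflTransGen_of_abs_sub_lt_two hz.1 hz'.1 fun i => ?_)
    (fun y hy => eventually_nhdsWithin_of_eventually_nhds (eventually_linked_openCubePoints hb hy))
    (fun p hp => ?_)
  · obtain ⟨hz₁, hz₂⟩ := abs_lt.mp (hz.2 i)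
    obtain ⟨hz₁', hz₂'⟩ := abs_lt.mp (hz'.2 i)
    rw [abs_lt]; constructor <;> linarith
  · obtain ⟨y, hy, hpy⟩ :=
      exists_mem_offset_of_mem_disc hr ((by positivity : (0 : ℝ) ≤ √(n - 1) / 2).trans hb) hp
    have hround : ∀ i, |(latticeRound y i : ℝ) - y i| < 1 :=
      fun i => (abs_sub_comm (y i) _ ▸ abs_sub_round (y i)).trans_lt (by norm_num)
    exact ⟨y, hy, latticeRound y,
      ⟨mem_disc_of_dist_le hy ((dist_latticeRound_le_dist_toE y p).trans hpy), hround⟩,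
      reflTransGen_latticeRound (Nat.zero_le _) (fun _ hz => mem_disc_of_dist_le hy hz) hpy⟩

end Lattice

theorem disc_conn_of_offset_connected_general (n : ℕ)
    (X : Set (EuclideanSpace ℝ (Fin n))) (r : ℝ)
    (hconn : IsConnected (offset n X r)) :
    kConn n (n - 1) (disc n X (r + Real.sqrt n / 2)) ∧
      kConn n 0 (disc n X (r + Real.sqrt (n - 1) / 2)) := by
  obtain ⟨y, hy⟩ := hconn.nonempty
  have hr : 0 ≤ r := by
    simp only [offset, mem_iUnion, mem_closedBall] at hy
    obtain ⟨x, _, hyx⟩ := hy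
    exact dist_nonneg.trans hyx
  exact ⟨kConn_disc_of_sqrt_div_two_le hconn.isPreconnected hr le_rfl le_rfl,
    kConn_zero_disc_of_sqrt_pred_div_two_le hconn.isPreconnected hr le_rfl⟩

/-- If `X ⊆ ℝ^n` (`n ≥ 2`) has a connected `r`-offset for some `r > 0`, then the
`(r + √n/2)`-offset discretization is `(n-1)`-connected and the `(r + √(n-1)/2)`-offset
discretization is `0`-connected. -/
theorem disc_conn_of_offset_connected (n : ℕ) (hn : 2 ≤ n)
    (X : Set (EuclideanSpace ℝ (Fin n))) (r : ℝ) (hr : 0 < r)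
    (hconn : IsConnected (offset n X r)) :
    kConn n (n - 1) (disc n X (r + Real.sqrt n / 2)) ∧
      kConn n 0 (disc n X (r + Real.sqrt (n - 1) / 2)) :=
  disc_conn_of_offset_connected_general n X r hconn
end
end
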